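/- Let (λ_n) be real with pairwise distances at least d > 0 and (c_n) absolutely summable with Σ_n |c_n| < ε, where ε(1 + 4/d) < 1. Fix an index k. Then for every z on the circle |z − λ_k| = d/2, one has |1 + c_k/(λ_k − z)| > |Σ_{n≠k} c_n/(λ_n − z)|. -/

import Mathlib

/-!
On the circle `|z - λ_k| = d/2` the gap condition keeps every other `λ_n` at distance at least
`d/2` from `z`, so both `|c_k / (λ_k - z)|` and `|∑_{n ≠ k} c_n / (λ_n - z)|` are controlled by
`(2/d)` times the corresponding part of `∑ |c_n| < ε`. The two parts add up to less than
`2ε/d < 1`, which is exactly the room needed between `|1 + c_k / (λ_k - z)| ≥ 1 - 2|c_k|/d` and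
the tail.
-/

section
variable {ι : Type*}

theorem Summable.add_tsum_subtype_ne {α : Type*} [AddCommGroup α] [UniformSpace α]
    [IsUniformAddGroup α] [CompleteSpace α] [T2Space α] {f : ι → α} (hf : Summable f) (k : ι) :
    f k + ∑' n : {n // n ≠ k}, f n = ∑' n, f n := by
  rw [← Summable.tsum_add_tsum_compl (s := {k}) (hf.subtype _) (hf.subtype _), tsum_singleton]
  rfl

theorem norm_tsum_div_le_of_le_norm {𝕜 : Type*} [NormedField 𝕜] {c w : ι → 𝕜} {r : ℝ}
    (hr : 0 < r) (hc : Summable fun i => ‖c i‖) (hw : ∀ i, r ≤ ‖w i‖) :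
    ‖∑' i, c i / w i‖ ≤ (∑' i, ‖c i‖) / r :=
  tsum_of_norm_bounded (hc.hasSum.div_const r) fun i => by
    rw [norm_div]; exact div_le_div_of_nonneg_left (norm_nonneg _) hr (hw i)

end

theorem half_le_norm_sub_of_le_norm_sub {E : Type*} [SeminormedAddCommGroup E] {a b z : E}
    {d : ℝ} (h : d ≤ ‖a - b‖) (hz : ‖z - b‖ ≤ d / 2) : d / 2 ≤ ‖a - z‖ := by
  linarith [norm_sub_le_norm_sub_add_norm_sub a z b]

theorem one_sub_norm_le_norm_one_add {E : Type*} [SeminormedRing E] [NormOneClass E] (x : E) :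
    1 - ‖x‖ ≤ ‖1 + x‖ := by
  simpa using norm_sub_norm_le (1 : E) (-x)

theorem lt_half_of_mul_one_add_four_div_lt_one {ε d : ℝ} (hd : 0 < d) (h : ε * (1 + 4 / d) < 1) :
    ε < d / 2 := by
  rw [mul_add, mul_one, mul_div_assoc', add_div' _ _ _ hd.ne', div_lt_one hd] at h
  rcases le_or_gt ε 0 with hε | hε <;> nlinarith

theorem rouche_inequality_on_circle (lam : ℤ → ℝ) (d : ℝ) (hd : 0 < d)
    (hgap : ∀ m n : ℤ, m ≠ n → d ≤ |lam m - lam n|)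
    (c : ℤ → ℂ) (hc : Summable fun n => ‖c n‖)
    (ε : ℝ) (hcε : ∑' n : ℤ, ‖c n‖ < ε) (hsmall : ε * (1 + 4 / d) < 1)
    (k : ℤ) (z : ℂ) (hz : ‖z - (lam k : ℂ)‖ = d / 2) :
    ‖(1 : ℂ) + c k / ((lam k : ℂ) - z)‖ >
      ‖∑' n : {n : ℤ // n ≠ k}, c n / ((lam (n : ℤ) : ℂ) - z)‖ := by
  have hr : 0 < d / 2 := by positivity
  have hfar : ∀ n : {n : ℤ // n ≠ k}, d / 2 ≤ ‖(lam n : ℂ) - z‖ := fun n =>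
    half_le_norm_sub_of_le_norm_sub
      (by rw [← Complex.ofReal_sub, Complex.norm_real]; exact hgap n k n.2) hz.le
  have hrest := norm_tsum_div_le_of_le_norm hr (hc.subtype _) hfar
  have hfirst : 1 - ‖c k‖ / (d / 2) ≤ ‖1 + c k / ((lam k : ℂ) - z)‖ := by
    simpa [norm_div, norm_sub_rev, hz] using
      one_sub_norm_le_norm_one_add (c k / ((lam k : ℂ) - z))
  have htotal : ‖c k‖ + ∑' n : {n : ℤ // n ≠ k}, ‖c n‖ < d / 2 :=
    (hc.add_tsum_subtype_ne k).trans_lt <|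
      hcε.trans <| lt_half_of_mul_one_add_four_div_lt_one hd hsmall
  rw [gt_iff_lt]
  refine hrest.trans_lt (lt_of_lt_of_le ?_ hfirst)
  rw [lt_sub_iff_add_lt, ← add_div, div_lt_one hr]
  linarith
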